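/- arXiv:gr-qc/0507089 — 2 statements merged into one kernel-verified Lean document; each statement's English description precedes it below -/
import Mathlib

section
/- Let $w_0 : \mathbb{R} \to \mathbb{R}$ be defined by $w_0(t) = \sqrt{2}\,\sin(\pi t)$ for $t \in [0,1]$ and $w_0(t) = 0$ otherwise. Then $\int_{\mathbb{R}} w_0(t)^2\, dt = 1$ and $\frac{1}{2}\int_0^\infty u^2\, |\widehat{w_0}(u)|^2\, du = \frac{\pi^3}{2}$; i.e., $w_0$ attains the minimal value of the functional $I$ among normalized functions supported in $[0,1]$. -/
open MeasureTheory Set Real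

noncomputable def fourierTr (w : ℝ → ℝ) (ω : ℝ) : ℂ :=
  ∫ t : ℝ, (w t : ℂ) * Complex.exp (-(Complex.I * ω * t))

/-!
Since `w₀` vanishes at `0` and `1`, integrating by parts on `[0, 1]` gives `u ŵ₀(u) = -i ĝ(u)`
for `g = w₀' · 1_[0,1]`, so `u² |ŵ₀(u)|² = |ĝ(u)|²`. Plancherel's theorem for `g ∈ L¹ ∩ L²`,
rescaled to the convention `e^{-iωt}` and halved by the symmetry `|ĝ(-u)| = |ĝ(u)|` of
real functions, turns `∫₀^∞ |ĝ|²` into `π ∫ g² = π · π²`.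

Plancherel on `L¹ ∩ L²` is obtained from the `L²` Fourier transform: as tempered distributions,
both it and the Fourier integral are `φ ↦ ∫ f · 𝓕φ`, so they agree almost everywhere.
-/

open FourierTransform ComplexConjugate
open Complex (I)

section Plancherel

open scoped SchwartzMap

variable {V F : Type*} [NormedAddCommGroup V] [InnerProductSpace ℝ V] [FiniteDimensional ℝ V]
  [MeasurableSpace V] [BorelSpace V] [NormedAddCommGroup F] [InnerProductSpace ℂ F]
  [CompleteSpace F]

theorem MeasureTheory.Integrable.fourier_toLp_ae_eq {f : V → F} (hf : Integrable f)
    (hf2 : MemLp f 2) :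
    ((𝓕 (hf2.toLp f) : Lp F 2 (volume : Measure V)) : V → F) =ᵐ[volume] 𝓕 f := by
  have hcont : Continuous (𝓕 f) := VectorFourier.fourierIntegral_continuous
    Real.continuous_fourierChar (innerSL ℝ).continuous₂ hf
  refine ae_eq_of_integral_contDiff_smul_eq
    ((Lp.memLp _).locallyIntegrable (by norm_num)) hcont.locallyIntegrable fun g hg hgc ↦ ?_
  let φ : 𝓢(V, ℂ) := (hgc.comp_left (g := Complex.ofRealCLM) rfl).toSchwartzMap (by fun_prop)
  have hφ : ∀ x, φ x = g x := fun x ↦ rfl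
  calc ∫ x, g x • (𝓕 (hf2.toLp f) : Lp F 2 (volume : Measure V)) x
      = ∫ x, φ x • 𝓕 (hf2.toLp f) x := by simp [hφ]
    _ = 𝓕 (Lp.toTemperedDistribution (hf2.toLp f)) φ := by
      rw [Lp.fourier_toTemperedDistribution_eq, Lp.toTemperedDistribution_apply]
    _ = ∫ x, 𝓕 φ x • f x := by
      rw [TemperedDistribution.fourier_apply, Lp.toTemperedDistribution_apply]
      exact integral_congr_ae (by filter_upwards [hf2.coeFn_toLp] with x hx; rw [hx])
    _ = ∫ x, φ x • 𝓕 f x := by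
      simpa [SchwartzMap.fourier_coe] using! VectorFourier.integral_fourierIntegral_smul_eq_flip
        (L := innerₗ V) Real.continuous_fourierChar continuous_inner
        (φ.integrable (μ := volume)) hf
    _ = ∫ x, g x • 𝓕 f x := by simp [hφ]

theorem MeasureTheory.Integrable.integral_norm_sq_fourier {f : V → F} (hf : Integrable f)
    (hf2 : MemLp f 2) : ∫ ξ, ‖𝓕 f ξ‖ ^ 2 = ∫ x, ‖f x‖ ^ 2 := by
  have hinner := Lp.inner_fourier_eq (hf2.toLp f) (hf2.toLp f)
  rw [L2.inner_def, L2.inner_def] at hinner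
  have hlhs : ∫ ξ, (inner ℂ ((𝓕 (hf2.toLp f) : Lp F 2 (volume : Measure V)) ξ)
      ((𝓕 (hf2.toLp f) : Lp F 2 (volume : Measure V)) ξ) : ℂ) = ∫ ξ, ((‖𝓕 f ξ‖ ^ 2 : ℝ) : ℂ) :=
    integral_congr_ae (by
      filter_upwards [hf.fourier_toLp_ae_eq hf2] with ξ hξ
      rw [hξ, inner_self_eq_norm_sq_to_K]; simp)
  have hrhs : ∫ x, (inner ℂ ((hf2.toLp f) x) ((hf2.toLp f) x) : ℂ) = ∫ x, ((‖f x‖ ^ 2 : ℝ) : ℂ) :=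
    integral_congr_ae (by
      filter_upwards [hf2.coeFn_toLp] with ξ hξ
      rw [hξ, inner_self_eq_norm_sq_to_K]; simp)
  rw [hlhs, hrhs, integral_complex_ofReal, integral_complex_ofReal] at hinner
  exact_mod_cast hinner

end Plancherel

theorem ContinuousOn.memLp_indicator {X E : Type*} [TopologicalSpace X] [R1Space X]
    [MeasurableSpace X] [OpensMeasurableSpace X] [NormedAddCommGroup E] [SecondCountableTopology E]
    {μ : Measure X} [IsFiniteMeasureOnCompacts μ] {f : X → E} {s : Set X} (hf : ContinuousOn f s)
    (hs : IsCompact s) (hsm : MeasurableSet s) (p : ENNReal) : MemLp (s.indicator f) p μ := by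
  obtain ⟨C, hC⟩ := hs.exists_bound_of_continuousOn hf
  refine HasCompactSupport.memLp_of_bound
    (HasCompactSupport.intro hs fun x hx ↦ indicator_of_notMem hx f)
    ((aestronglyMeasurable_indicator_iff hsm).2 (hf.aestronglyMeasurable hsm)) (max C 0)
    (ae_of_all _ fun x ↦ ?_)
  by_cases hx : x ∈ s
  · rw [indicator_of_mem hx]; exact le_max_of_le_left (hC x hx)
  · rw [indicator_of_notMem hx, norm_zero]; exact le_max_right _ _

theorem integral_indicator_Icc {E : Type*} [NormedAddCommGroup E] [NormedSpace ℝ E]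
    (g : ℝ → E) {a b : ℝ} (hab : a ≤ b) :
    ∫ t, (Icc a b).indicator g t = ∫ t in a..b, g t := by
  rw [integral_indicator measurableSet_Icc, integral_Icc_eq_integral_Ioc,
    intervalIntegral.integral_of_le hab]

theorem integral_sq_indicator_Icc (g : ℝ → ℝ) {a b : ℝ} (hab : a ≤ b) :
    ∫ t, (Icc a b).indicator g t ^ 2 = ∫ t in a..b, g t ^ 2 := by
  rw [← integral_indicator_Icc _ hab]
  congr 1; ext t
  by_cases ht : t ∈ Icc a b <;> simp [ht]

theorem fourierTr_eq_fourier (w : ℝ → ℝ) (ω : ℝ) :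
    fourierTr w ω = 𝓕 (fun t ↦ (w t : ℂ)) ((2 * π)⁻¹ * ω) := by
  rw [fourierTr, Real.fourier_real_eq_integral_exp_smul]
  congr 1; ext t
  rw [smul_eq_mul, mul_comm]
  congr 2
  push_cast
  field_simp

theorem fourierTr_neg (w : ℝ → ℝ) (ω : ℝ) : fourierTr w (-ω) = conj (fourierTr w ω) := by
  rw [fourierTr, fourierTr, ← integral_conj]
  congr 1; ext t
  rw [map_mul, Complex.conj_ofReal, ← Complex.exp_conj]
  congr 2
  simp

theorem integral_norm_sq_fourierTr {w : ℝ → ℝ} (hw : Integrable w) (hw2 : MemLp w 2) :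
    ∫ ω, ‖fourierTr w ω‖ ^ 2 = 2 * π * ∫ t, w t ^ 2 := by
  simp_rw [fourierTr_eq_fourier]
  rw [Measure.integral_comp_mul_left (fun ξ ↦ ‖𝓕 (fun t ↦ (w t : ℂ)) ξ‖ ^ 2),
    hw.ofReal.integral_norm_sq_fourier hw2.ofReal]
  simp [abs_of_pos pi_pos]

theorem setIntegral_Ioi_norm_sq_fourierTr {w : ℝ → ℝ} (hw : Integrable w) (hw2 : MemLp w 2) :
    ∫ ω in Ioi 0, ‖fourierTr w ω‖ ^ 2 = π * ∫ t, w t ^ 2 := by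
  have heven : ∀ ω, ‖fourierTr w |ω|‖ ^ 2 = ‖fourierTr w ω‖ ^ 2 := fun ω ↦ by
    rcases abs_choice ω with h | h <;> simp [h, fourierTr_neg]
  have h := integral_comp_abs (f := fun ω ↦ ‖fourierTr w ω‖ ^ 2)
  simp only [heven, integral_norm_sq_fourierTr hw hw2] at h
  linarith

theorem fourierTr_indicator (f : ℝ → ℝ) {a b : ℝ} (hab : a ≤ b) (ω : ℝ) :
    fourierTr ((Icc a b).indicator f) ω
      = ∫ t in a..b, (f t : ℂ) * Complex.exp (-(I * ω * t)) := by
  have h : (fun t ↦ (((Icc a b).indicator f t : ℝ) : ℂ) * Complex.exp (-(I * ω * t)))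
      = (Icc a b).indicator (fun t ↦ (f t : ℂ) * Complex.exp (-(I * ω * t))) := by
    ext t; by_cases ht : t ∈ Icc a b <;> simp [ht]
  rw [fourierTr, h, integral_indicator_Icc _ hab]

theorem fourierTr_indicator_deriv {f f' : ℝ → ℝ} {a b : ℝ} (hab : a ≤ b)
    (hf : ∀ t ∈ Icc a b, HasDerivAt f (f' t) t) (hf' : ContinuousOn f' (Icc a b))
    (ha : f a = 0) (hb : f b = 0) (ω : ℝ) :
    fourierTr ((Icc a b).indicator f') ω = I * ω * fourierTr ((Icc a b).indicator f) ω := by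
  have hexp : ∀ t : ℝ, HasDerivAt (fun t : ℝ ↦ Complex.exp (-(I * ω * t)))
      (Complex.exp (-(I * ω * t)) * -(I * ω)) t := fun t ↦ by
    simpa using ((hasDerivAt_id (t : ℂ)).const_mul (-(I * ω))).cexp.comp_ofReal
  have hparts := intervalIntegral.integral_mul_deriv_eq_deriv_mul (a := a) (b := b)
    (fun t ht ↦ (hf t (uIcc_of_le hab ▸ ht)).ofReal_comp) (fun t _ ↦ hexp t)
    ((Complex.continuous_ofReal.comp_continuousOn hf').intervalIntegrable_of_Icc hab)
    (by apply Continuous.intervalIntegrable; fun_prop)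
  simp only [ha, hb, Complex.ofReal_zero, zero_mul, sub_zero, zero_sub] at hparts
  rw [fourierTr_indicator _ hab, fourierTr_indicator _ hab, ← intervalIntegral.integral_const_mul,
    ← neg_neg (∫ t in a..b, _), ← hparts, ← intervalIntegral.integral_neg]
  congr 1; ext t; ring

theorem setIntegral_Ioi_sq_mul_norm_sq_fourierTr_indicator {f f' : ℝ → ℝ} {a b : ℝ}
    (hab : a ≤ b) (hf : ∀ t ∈ Icc a b, HasDerivAt f (f' t) t) (hf' : ContinuousOn f' (Icc a b))
    (ha : f a = 0) (hb : f b = 0) :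
    ∫ u in Ioi 0, u ^ 2 * ‖fourierTr ((Icc a b).indicator f) u‖ ^ 2
      = π * ∫ t in a..b, f' t ^ 2 := by
  have hpt : ∀ u : ℝ, u ^ 2 * ‖fourierTr ((Icc a b).indicator f) u‖ ^ 2
      = ‖fourierTr ((Icc a b).indicator f') u‖ ^ 2 := fun u ↦ by
    rw [fourierTr_indicator_deriv hab hf hf' ha hb, norm_mul, norm_mul, Complex.norm_I,
      Complex.norm_real, Real.norm_eq_abs, one_mul, mul_pow, sq_abs]
  simp_rw [hpt, setIntegral_Ioi_norm_sq_fourierTr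
    (memLp_one_iff_integrable.1 (hf'.memLp_indicator isCompact_Icc measurableSet_Icc 1))
    (hf'.memLp_indicator isCompact_Icc measurableSet_Icc 2), integral_sq_indicator_Icc _ hab]

theorem integral_sin_pi_mul_sq : ∫ t in (0 : ℝ)..1, sin (π * t) ^ 2 = 1 / 2 := by
  rw [intervalIntegral.integral_comp_mul_left (fun x ↦ sin x ^ 2) pi_ne_zero, integral_sin_sq]
  simp [field]

theorem integral_cos_pi_mul_sq : ∫ t in (0 : ℝ)..1, cos (π * t) ^ 2 = 1 / 2 := by
  rw [intervalIntegral.integral_comp_mul_left (fun x ↦ cos x ^ 2) pi_ne_zero, integral_cos_sq]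
  simp [field]

/-- the lowest Dirichlet eigenfunction `w₀(t) = √2 sin(π t)` on
`[0,1]`, extended by zero, is normalized (`∫ w₀² = 1`) and attains the minimal
value `π³/2` of the functional `I = ½ ∫₀^∞ u² |ŵ₀(u)|² du`. -/
theorem I_attains_minimum
    (w₀ : ℝ → ℝ)
    (hw₀ : ∀ t, w₀ t = if t ∈ Icc (0:ℝ) 1 then Real.sqrt 2 * Real.sin (π * t) else 0) :
    ((∫ t : ℝ, w₀ t ^ 2) = 1) ∧
      (1 / 2) * (∫ u in Ioi (0:ℝ), u ^ 2 * ‖fourierTr w₀ u‖ ^ 2) = π ^ 3 / 2 := by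
  have hw : w₀ = (Icc 0 1).indicator fun t ↦ √2 * sin (π * t) :=
    funext fun t ↦ by rw [hw₀, indicator_apply]
  have hderiv : ∀ t ∈ Icc (0 : ℝ) 1,
      HasDerivAt (fun t ↦ √2 * sin (π * t)) (√2 * (π * cos (π * t))) t := fun t _ ↦ by
    simpa [mul_comm] using ((hasDerivAt_mul_const π).sin.const_mul √2 : HasDerivAt _ _ t)
  subst hw
  constructor
  · rw [integral_sq_indicator_Icc _ zero_le_one]
    simp_rw [mul_pow, sq_sqrt zero_le_two]
    rw [intervalIntegral.integral_const_mul, integral_sin_pi_mul_sq]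
    norm_num
  · rw [setIntegral_Ioi_sq_mul_norm_sq_fourierTr_indicator zero_le_one hderiv (by fun_prop)
      (by simp) (by simp [sin_pi])]
    simp_rw [mul_pow, sq_sqrt zero_le_two]
    rw [intervalIntegral.integral_const_mul, intervalIntegral.integral_const_mul,
      integral_cos_pi_mul_sq]
    ring
end

section
/- Let $R > 0$ and let $f, m, p, \rho : (0, R) \to \mathbb{R}$ with $f, m$ differentiable, and suppose that for all $r \in (0,R)$: $f(r) > 0$, $r - 2m(r) > 0$, $m'(r) = 4\pi r^2 \rho(r)$, and $f'(r) = f(r)\, \frac{2\left(m(r) + 4\pi r^3 p(r)\right)}{r\,(r - 2m(r))}$. Define $h(r) = 1 - 2m(r)/r$ and $g(r) = \sqrt{f(r) h(r)}$. Then $g$ is differentiable on $(0,R)$ and for every $r \in (0,R)$ the condition $\alpha(r) = \frac{g(r)\, g'(r)}{r} > 0$ holds if and only if $m(r) + 2\pi r^3\left[p(r) - \rho(r)\right] > 0$. -/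
open Real Set

/-! Since `g = √F` with `F = f h > 0`, one has `g g' = F' / 2`, so `α = F' / (2r)`.
The TOV equation for `f` and `m' = 4π r² ρ` give `F' = (4f / r²) (m + 2π r³ (p - ρ))`,
and `f > 0` makes the sign of `α` that of `m + 2π r³ (p - ρ)`. -/

theorem sqrt_mul_deriv_sqrt {F : ℝ → ℝ} {F' x : ℝ} (hF : HasDerivAt F F' x) (hx : 0 < F x) :
    √(F x) * deriv (fun s => √(F s)) x = F' / 2 := by
  have hsqrt : 0 < √(F x) := Real.sqrt_pos.mpr hx
  rw [(hF.sqrt hx.ne').deriv]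
  field_simp

theorem hasDerivAt_mul_one_sub_two_mul_div_of_tov {f m p ρ : ℝ → ℝ} {r : ℝ}
    (hr : r ≠ 0) (hrm : r - 2 * m r ≠ 0)
    (hm : HasDerivAt m (4 * π * r ^ 2 * ρ r) r)
    (hf : HasDerivAt f (f r * (2 * (m r + 4 * π * r ^ 3 * p r) / (r * (r - 2 * m r)))) r) :
    HasDerivAt (fun s => f s * (1 - 2 * m s / s))
      (4 * f r / r ^ 2 * (m r + 2 * π * r ^ 3 * (p r - ρ r))) r := by
  have hh : HasDerivAt (fun s => 1 - 2 * m s / s)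
      (0 - (2 * (4 * π * r ^ 2 * ρ r) * r - 2 * m r * 1) / r ^ 2) r :=
    (hasDerivAt_const r 1).sub ((hm.const_mul 2).div (hasDerivAt_id r) hr)
  refine (hf.mul hh).congr_deriv ?_
  field_simp
  ring

theorem mul_one_sub_two_mul_div_pos {f m r : ℝ} (hf : 0 < f) (hr : 0 < r) (hrm : 0 < r - 2 * m) :
    0 < f * (1 - 2 * m / r) := by
  have : 1 - 2 * m / r = (r - 2 * m) / r := by field_simp
  rw [this]
  positivity

theorem ground_state_condition_perfect_fluid_general
    (R : ℝ) (f m p ρ : ℝ → ℝ)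
    (hf_pos : ∀ r ∈ Ioo 0 R, 0 < f r)
    (hh_pos : ∀ r ∈ Ioo 0 R, 0 < r - 2 * m r)
    (hm : ∀ r ∈ Ioo 0 R, HasDerivAt m (4 * π * r ^ 2 * ρ r) r)
    (hf : ∀ r ∈ Ioo 0 R,
      HasDerivAt f (f r * (2 * (m r + 4 * π * r ^ 3 * p r) / (r * (r - 2 * m r)))) r)
    (g : ℝ → ℝ)
    (hg : ∀ r, g r = Real.sqrt (f r * (1 - 2 * m r / r))) :
    (∀ r ∈ Ioo 0 R, DifferentiableAt ℝ g r) ∧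
      ∀ r ∈ Ioo 0 R,
        (0 < g r * deriv g r / r ↔ 0 < m r + 2 * π * r ^ 3 * (p r - ρ r)) := by
  obtain rfl : g = fun r => √(f r * (1 - 2 * m r / r)) := funext hg
  have hF (r) (hr : r ∈ Ioo 0 R) := hasDerivAt_mul_one_sub_two_mul_div_of_tov (p := p)
    hr.1.ne' (hh_pos r hr).ne' (hm r hr) (hf r hr)
  have hF_pos (r) (hr : r ∈ Ioo 0 R) :=
    mul_one_sub_two_mul_div_pos (hf_pos r hr) hr.1 (hh_pos r hr)
  refine ⟨fun r hr => ((hF r hr).sqrt (hF_pos r hr).ne').differentiableAt, fun r hr => ?_⟩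
  have hα : √(f r * (1 - 2 * m r / r)) * deriv (fun s => √(f s * (1 - 2 * m s / s))) r / r =
      2 * f r / r ^ 3 * (m r + 2 * π * r ^ 3 * (p r - ρ r)) := by
    rw [sqrt_mul_deriv_sqrt (hF r hr) (hF_pos r hr)]
    field_simp
    ring
  have hcoeff : 0 < 2 * f r / r ^ 3 := div_pos (by linarith [hf_pos r hr]) (pow_pos hr.1 3)
  rw [hα, mul_pos_iff_of_pos_left hcoeff]

/-- for a static spherically symmetric perfect-fluid spacetime
with `h(r) = 1 - 2m(r)/r`, `m' = 4π r² ρ`, and the TOV-type equation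
`f' = f · 2(m + 4π r³ p)/(r(r - 2m))`, the function `g = √(f h)` is
differentiable on `(0,R)` and the condition `α(r) = g(r) g'(r)/r > 0` holds
iff `m(r) + 2π r³ (p(r) - ρ(r)) > 0`. -/
theorem ground_state_condition_perfect_fluid
    (R : ℝ) (hR : 0 < R) (f m p ρ : ℝ → ℝ)
    (hf_pos : ∀ r ∈ Ioo 0 R, 0 < f r)
    (hh_pos : ∀ r ∈ Ioo 0 R, 0 < r - 2 * m r)
    (hm : ∀ r ∈ Ioo 0 R, HasDerivAt m (4 * π * r ^ 2 * ρ r) r)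
    (hf : ∀ r ∈ Ioo 0 R,
      HasDerivAt f (f r * (2 * (m r + 4 * π * r ^ 3 * p r) / (r * (r - 2 * m r)))) r)
    (g : ℝ → ℝ)
    (hg : ∀ r, g r = Real.sqrt (f r * (1 - 2 * m r / r))) :
    (∀ r ∈ Ioo 0 R, DifferentiableAt ℝ g r) ∧
      ∀ r ∈ Ioo 0 R,
        (0 < g r * deriv g r / r ↔ 0 < m r + 2 * π * r ^ 3 * (p r - ρ r)) :=
  ground_state_condition_perfect_fluid_general R f m p ρ hf_pos hh_pos hm hf g hg
end
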